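/- Let V be a finite vertex set partitioned as V=V_1⊔V_2 with both parts nonempty, and let (G,p) be a well-positioned framework in (ℝ^d,‖·‖_P) with colours among {1,…,m}, m≤d, b_1,…,b_m linearly independent. Fix k≤m and suppose no edge of framework colour k joins V_1 to V_2. Let z≠0 be Euclidean-orthogonal to span{b_l : l≤m, l≠k}, and define u_j=0 for v_j∈V_1, u_j=z for v_j∈V_2. Then u is a non-trivial infinitesimal flex of (G,p), so (G,p) is infinitesimally flexible. -/
import Mathlib


open Filter

/-- Euclidean dot product on `ℝ^d`. -/
def dotp {d : ℕ} (a b : Fin d → ℝ) : ℝ := ∑ i, a i * b i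

/-- The polytopic norm `‖a‖_P = max_k |a · b_k|` determined by vectors `b₁,…,b_s`. -/
noncomputable def pNorm {d s : ℕ} (b : Fin s → Fin d → ℝ) (a : Fin d → ℝ) : ℝ :=
  sSup {x : ℝ | ∃ k, x = |dotp (b k) a|}

/-- An infinitesimal flex of `(G,p)` with respect to the polytopic norm given by `b`. -/
def IsFlexP {d s n : ℕ} (b : Fin s → Fin d → ℝ) (G : SimpleGraph (Fin n))
    (p u : Fin n → Fin d → ℝ) : Prop :=
  ∀ i j, G.Adj i j →
    (fun t : ℝ => pNorm b ((p i + t • u i) - (p j + t • u j)) - pNorm b (p i - p j))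
      =o[nhds (0 : ℝ)] (fun t : ℝ => t)

lemma dotp_add {d : ℕ} (b a c : Fin d → ℝ) : dotp b (a + c) = dotp b a + dotp b c := by
  simp [dotp, mul_add, Finset.sum_add_distrib]

lemma dotp_smul {d : ℕ} (b : Fin d → ℝ) (t : ℝ) (c : Fin d → ℝ) :
    dotp b (t • c) = t * dotp b c := by
  simp [dotp, Finset.mul_sum, mul_left_comm]

lemma dotp_neg {d : ℕ} (b c : Fin d → ℝ) : dotp b (-c) = -dotp b c := by
  simp [dotp]

lemma dotp_zero {d : ℕ} (b : Fin d → ℝ) : dotp b 0 = 0 := by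
  simp [dotp]

lemma pNorm_set_eq {d s : ℕ} (b : Fin s → Fin d → ℝ) (a : Fin d → ℝ) :
    {x : ℝ | ∃ k, x = |dotp (b k) a|} = Set.range (fun k => |dotp (b k) a|) := by
  ext x; simp [eq_comm, Set.range]

lemma le_pNorm {d s : ℕ} [Nonempty (Fin s)] (b : Fin s → Fin d → ℝ) (a : Fin d → ℝ)
    (l : Fin s) : |dotp (b l) a| ≤ pNorm b a := by
  rw [pNorm, pNorm_set_eq]
  exact le_csSup (Set.finite_range _).bddAbove ⟨l, rfl⟩

lemma pNorm_le {d s : ℕ} [Nonempty (Fin s)] (b : Fin s → Fin d → ℝ) (a : Fin d → ℝ) {C : ℝ}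
    (h : ∀ l, |dotp (b l) a| ≤ C) : pNorm b a ≤ C := by
  rw [pNorm, pNorm_set_eq]
  exact csSup_le (Set.range_nonempty _) (by rintro x ⟨l, rfl⟩; exact h l)

/-- If no edge of framework colour `k` joins the two nonempty parts `V₁, V₂ = V₁ᶜ` of
the vertex set, then moving `V₂` by a vector `z ≠ 0` orthogonal to the other `b_l`
(`l ≤ m`, `l ≠ k`) gives a non-trivial infinitesimal flex, so `(G,p)` is
infinitesimally flexible. -/
theorem disconnected_monochrome_gives_flex {d s n m : ℕ}
    (b : Fin s → Fin d → ℝ) (G : SimpleGraph (Fin n))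
    (p : Fin n → Fin d → ℝ) (col : Fin n → Fin n → Fin s)
    (hwp : ∀ i j, G.Adj i j →
      ∀ l, pNorm b (p i - p j) = |dotp (b l) (p i - p j)| ↔ l = col i j)
    (hm : m ≤ d) (hms : m ≤ s)
    (hind : LinearIndependent ℝ (fun l : Fin m => b (Fin.castLE hms l)))
    (hcolm : ∀ i j, G.Adj i j → (col i j : ℕ) < m)
    (k : Fin s) (hk : (k : ℕ) < m)
    (V₁ : Set (Fin n)) [DecidablePred (· ∈ V₁)] (hV₁ : V₁.Nonempty) (hV₂ : V₁ᶜ.Nonempty)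
    (hcross : ∀ i j, G.Adj i j → col i j = k → (i ∈ V₁ ↔ j ∈ V₁))
    (z : Fin d → ℝ) (hz : z ≠ 0)
    (hzorth : ∀ l : Fin s, (l : ℕ) < m → l ≠ k → dotp (b l) z = 0)
    (u : Fin n → Fin d → ℝ) (hu : u = fun j => if j ∈ V₁ then 0 else z) :
    IsFlexP b G p u ∧ ¬∃ a, ∀ i, u i = a := by
  haveI : Nonempty (Fin s) := ⟨k⟩
  constructor
  · intro i j hij
    set a : Fin d → ℝ := p i - p j with ha
    set c : Fin d → ℝ := u i - u j with hc
    have hqt : ∀ t : ℝ, (p i + t • u i) - (p j + t • u j) = a + t • c := by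
      intro t
      rw [ha, hc, smul_sub]
      abel
    have hcolmm := hcolm i j hij
    have hdotc : dotp (b (col i j)) c = 0 := by
      by_cases hiV : i ∈ V₁ <;> by_cases hjV : j ∈ V₁
      · have : c = 0 := by simp [hc, hu, hiV, hjV]
        rw [this, dotp_zero]
      · have hck : col i j ≠ k := fun h => hjV ((hcross i j hij h).mp hiV)
        have : c = -z := by simp [hc, hu, hiV, hjV]
        rw [this, dotp_neg, hzorth _ hcolmm hck, neg_zero]
      · have hck : col i j ≠ k := fun h => hiV ((hcross i j hij h).mpr hjV)
        have : c = z := by simp [hc, hu, hiV, hjV]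
        rw [this, hzorth _ hcolmm hck]
      · have : c = 0 := by simp [hc, hu, hiV, hjV]
        rw [this, dotp_zero]
    have hccol : pNorm b a = |dotp (b (col i j)) a| := (hwp i j hij (col i j)).mpr rfl
    have hne : ∀ l, l ≠ col i j → |dotp (b l) a| < pNorm b a := by
      intro l hl
      refine lt_of_le_of_ne (le_pNorm b a l) ?_
      intro h
      exact hl ((hwp i j hij l).mp h.symm)
    have hev : ∀ᶠ t in nhds (0 : ℝ), ∀ l, |dotp (b l) (a + t • c)| ≤ pNorm b a := by
      rw [eventually_all]
      intro l
      by_cases hl : l = col i j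
      · subst hl
        filter_upwards with t
        rw [dotp_add, dotp_smul, hdotc, mul_zero, add_zero]
        exact hccol.ge
      · have hlt := hne l hl
        have hcont : Continuous (fun t : ℝ => |dotp (b l) a + t * dotp (b l) c|) := by
          continuity
        have htd := hcont.tendsto 0
        have h0 : |dotp (b l) a + 0 * dotp (b l) c| < pNorm b a := by simpa using hlt
        filter_upwards [htd.eventually_lt_const h0] with t ht
        rw [dotp_add, dotp_smul]
        exact ht.le
    have heq : ∀ᶠ t in nhds (0 : ℝ), pNorm b (a + t • c) = pNorm b a := by
      filter_upwards [hev] with t ht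
      refine le_antisymm (pNorm_le b _ ht) ?_
      calc pNorm b a = |dotp (b (col i j)) (a + t • c)| := by
            rw [dotp_add, dotp_smul, hdotc, mul_zero, add_zero]
            exact hccol
        _ ≤ pNorm b (a + t • c) := le_pNorm b _ _
    have hEq0 : (fun t : ℝ => pNorm b ((p i + t • u i) - (p j + t • u j)) - pNorm b (p i - p j))
        =ᶠ[nhds (0 : ℝ)] (fun _ => (0 : ℝ)) := by
      filter_upwards [heq] with t ht
      rw [hqt t, ht, ← ha, sub_self]
    exact hEq0.trans_isLittleO (Asymptotics.isLittleO_zero _ _)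
  · rintro ⟨v, hv⟩
    obtain ⟨i₀, hi₀⟩ := hV₁
    obtain ⟨j₀, hj₀⟩ := hV₂
    apply hz
    have h1 := hv i₀
    have h2 := hv j₀
    rw [hu] at h1 h2
    simp only [hi₀, if_true] at h1
    have hj₀' : j₀ ∉ V₁ := hj₀
    simp only [hj₀', if_false] at h2
    rw [h2, ← h1]
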